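/- arXiv:2011.03194 — 2 statements merged into one kernel-verified Lean document; each statement's English description precedes it below -/
import Mathlib

section
/- Let x ∈ [0,1]^m be a rational vector in the spanning tree polytope ST(G). Then there exists a positive integer L such that L·x_e is an integer for all edges e, and the multigraph obtained from G by replacing each edge e with L·x_e parallel copies contains L pairwise edge-disjoint spanning trees. -/
open scoped Classical

/-- Rational approximation of a real solution to a rational linear system:
given finitely many reals `a i`, there are rationals `q i` arbitrarily close to the `a i`
that satisfy *every* rational linear relation satisfied by the `a i`. -/
lemma rational_approx_solution {ι : Type} (t : Finset ι) (a : ι → ℝ) (ε : ℝ) (hε : 0 < ε) :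
    ∃ q : ι → ℚ, (∀ i ∈ t, |(q i : ℝ) - a i| < ε) ∧
      ∀ (χ : ι → ℚ) (r : ℚ), (∑ i ∈ t, (χ i : ℝ) * a i) = (r : ℝ) →
        (∑ i ∈ t, χ i * q i) = r := by
  have h1 : LinearIndepOn ℚ id ({(1 : ℝ)} : Set ℝ) :=
    (linearIndepOn_singleton_iff ℚ).mpr one_ne_zero
  set b : Module.Basis _ ℚ ℝ := Module.Basis.extend h1 with hb
  have h1mem : (1 : ℝ) ∈ h1.extend (Set.subset_univ _) :=
    h1.subset_extend _ rfl
  set i₁ : h1.extend (Set.subset_univ _) := ⟨1, h1mem⟩ with hi₁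
  have hb1 : b i₁ = (1 : ℝ) := Module.Basis.extend_apply_self h1 i₁
  have hbc : ∀ c : h1.extend (Set.subset_univ _), b c = (c : ℝ) := fun c =>
    Module.Basis.extend_apply_self h1 c
  have hrepr : ∀ r : ℚ, b.repr (r : ℝ) = Finsupp.single i₁ r := by
    intro r
    have : (r : ℝ) = r • b i₁ := by rw [hb1, Rat.smul_def, mul_one]
    rw [this, map_smul, Module.Basis.repr_self, Finsupp.smul_single, smul_eq_mul, mul_one]
  set F : Finset (h1.extend (Set.subset_univ _)) :=
    insert i₁ (t.sup fun i => (b.repr (a i)).support) with hF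
  have hsupp : ∀ i ∈ t, (b.repr (a i)).support ⊆ F := by
    intro i hi
    exact (Finset.le_sup (f := fun i => (b.repr (a i)).support) hi).trans
      (Finset.subset_insert _ _)
  set M : ℝ := ∑ i ∈ t, ∑ c ∈ F, |((b.repr (a i)) c : ℝ)| with hM
  have hM0 : 0 ≤ M := Finset.sum_nonneg fun i _ => Finset.sum_nonneg fun c _ => abs_nonneg _
  set δ : ℝ := ε / (M + 1) with hδ
  have hδ0 : 0 < δ := div_pos hε (by linarith)
  have hs : ∀ c : h1.extend (Set.subset_univ _), ∃ s : ℚ, |(c : ℝ) - s| < δ :=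
    fun c => exists_rat_near _ hδ0
  set s : h1.extend (Set.subset_univ _) → ℚ :=
    fun c => if c = i₁ then 1 else Classical.choose (hs c) with hsdef
  have hs1 : s i₁ = 1 := by simp [hsdef]
  have hsnear : ∀ c : h1.extend (Set.subset_univ _), |(c : ℝ) - (s c : ℝ)| < δ := by
    intro c
    by_cases hc : c = i₁
    · subst hc
      simp only [hs1, hi₁]
      simpa [hsdef, hi₁] using hδ0
    · simp only [hsdef, if_neg hc]
      exact Classical.choose_spec (hs c)
  have main : ∀ g : (h1.extend (Set.subset_univ _)) →₀ ℚ,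
      (∑ c ∈ F, |((g c : ℝ))|) ≤ M →
      |((∑ c ∈ F, g c * s c : ℚ) : ℝ) - ∑ c ∈ F, (g c : ℝ) * (c : ℝ)| < ε := by
    intro g hgM
    have hcast : ((∑ c ∈ F, g c * s c : ℚ) : ℝ) = ∑ c ∈ F, (g c : ℝ) * (s c : ℝ) := by
      push_cast; ring_nf
    rw [hcast, ← Finset.sum_sub_distrib]
    calc |∑ c ∈ F, ((g c : ℝ) * (s c : ℝ) - (g c : ℝ) * (c : ℝ))|
        ≤ ∑ c ∈ F, |(g c : ℝ) * (s c : ℝ) - (g c : ℝ) * (c : ℝ)| :=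
          Finset.abs_sum_le_sum_abs _ _
      _ ≤ ∑ c ∈ F, |(g c : ℝ)| * δ := by
          refine Finset.sum_le_sum fun c _ => ?_
          rw [← mul_sub, abs_mul]
          exact mul_le_mul_of_nonneg_left
            (le_of_lt (by rw [abs_sub_comm]; exact hsnear c)) (abs_nonneg _)
      _ = (∑ c ∈ F, |(g c : ℝ)|) * δ := by rw [Finset.sum_mul]
      _ ≤ M * δ := mul_le_mul_of_nonneg_right hgM (le_of_lt hδ0)
      _ < ε := by
          rw [hδ, mul_div_assoc']
          rw [div_lt_iff₀ (by linarith : (0:ℝ) < M + 1)]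
          nlinarith
  refine ⟨fun i => ∑ c ∈ F, (b.repr (a i)) c * s c, ?_, ?_⟩
  · intro i hi
    have hai : (∑ c ∈ F, ((b.repr (a i)) c : ℝ) * (c : ℝ)) = a i := by
      conv_rhs => rw [← b.linearCombination_repr (a i)]
      rw [Finsupp.linearCombination_apply, Finsupp.sum]
      rw [← Finset.sum_subset (hsupp i hi)]
      · refine Finset.sum_congr rfl fun c _ => ?_
        rw [hbc, Rat.smul_def]
      · intro c _ hc
        rw [Finsupp.notMem_support_iff.mp hc]
        simp
    have hbM : (∑ c ∈ F, |((b.repr (a i)) c : ℝ)|) ≤ M :=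
      Finset.single_le_sum (f := fun j => ∑ c ∈ F, |((b.repr (a j)) c : ℝ)|)
        (fun j _ => Finset.sum_nonneg fun c _ => abs_nonneg _) hi
    have := main (b.repr (a i)) hbM
    rwa [hai] at this
  · intro χ r hrel
    have h2 : (∑ i ∈ t, χ i • a i) = ((r : ℚ) : ℝ) := by
      rw [← hrel]
      exact Finset.sum_congr rfl fun i _ => by rw [Rat.smul_def]
    have key : (Finsupp.single i₁ r : _ →₀ ℚ) = ∑ i ∈ t, χ i • b.repr (a i) := by
      rw [← hrepr r, ← h2, map_sum]
      exact Finset.sum_congr rfl fun i _ => by rw [map_smul]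
    have keyc : ∀ c, (Finsupp.single i₁ r : _ →₀ ℚ) c
        = ∑ i ∈ t, χ i * (b.repr (a i)) c := by
      intro c
      rw [key, Finset.sum_apply']
      exact Finset.sum_congr rfl fun i _ => by rw [Finsupp.smul_apply, smul_eq_mul]
    calc ∑ i ∈ t, χ i * ∑ c ∈ F, (b.repr (a i)) c * s c
        = ∑ i ∈ t, ∑ c ∈ F, χ i * (b.repr (a i)) c * s c := by
          refine Finset.sum_congr rfl fun i _ => ?_
          rw [Finset.mul_sum]
          exact Finset.sum_congr rfl fun c _ => by ring
      _ = ∑ c ∈ F, (∑ i ∈ t, χ i * (b.repr (a i)) c) * s c := by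
          rw [Finset.sum_comm]
          exact Finset.sum_congr rfl fun c _ => by rw [Finset.sum_mul]
      _ = ∑ c ∈ F, (Finsupp.single i₁ r : _ →₀ ℚ) c * s c := by
          exact Finset.sum_congr rfl fun c _ => by rw [keyc]
      _ = r := by
          rw [Finset.sum_eq_single_of_mem i₁ (Finset.mem_insert_self _ _)]
          · rw [Finsupp.single_eq_same, hs1, mul_one]
          · intro c _ hc
            rw [Finsupp.single_eq_of_ne hc, zero_mul]

/-- Given multiplicities `k i` on a finite index set summing to `L`, there is an assignment
`Fin L → {i // i ∈ t'}` whose fibers have the prescribed sizes (stated via counting). -/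
lemma exists_fiber_assignment {ι : Type} (t' : Finset ι) (k : ι → ℕ) (L : ℕ)
    (hkL : ∑ i ∈ t', k i = L) :
    ∃ f : Fin L → {i // i ∈ t'}, ∀ P : ι → Prop,
      {n : Fin L | P (f n).1}.ncard = ∑ i ∈ t'.filter P, k i := by
  have hcard : Fintype.card (Σ i : {i // i ∈ t'}, Fin (k i.1)) = Fintype.card (Fin L) := by
    rw [Fintype.card_sigma, Fintype.card_fin]
    simp only [Fintype.card_fin]
    rw [← hkL]
    exact Finset.sum_coe_sort t' k
  set E := Fintype.equivOfCardEq hcard with hE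
  refine ⟨fun n => (E.symm n).1, fun P => ?_⟩
  rw [← Nat.card_coe_set_eq]
  have e1 : {n : Fin L // P ((E.symm n).1.1)} ≃
      {s : Σ i : {i // i ∈ t'}, Fin (k i.1) // P s.1.1} :=
    (Equiv.subtypeEquiv E.symm fun n => Iff.rfl)
  have e2 : {s : Σ i : {i // i ∈ t'}, Fin (k i.1) // P s.1.1} ≃
      Σ s : {y : {i // i ∈ t'} // P y.1}, Fin (k s.1.1) :=
    Equiv.subtypeSigmaEquiv (fun i : {i // i ∈ t'} => Fin (k i.1)) (fun y => P y.1)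
  have hcc : Nat.card ↑{n : Fin L | P ((E.symm n).1.1)}
      = Fintype.card ((s : { y : {i // i ∈ t'} // P y.1 }) × Fin (k s.1.1)) := by
    rw [← Nat.card_eq_fintype_card]
    exact Nat.card_congr (e1.trans e2)
  rw [hcc, Fintype.card_sigma]
  simp only [Fintype.card_fin]
  have h3 : ∑ s : {y : {i // i ∈ t'} // P (y:ι)}, k s.1.1
      = ∑ y ∈ (Finset.univ.filter fun y : {i // i ∈ t'} => P y.1), k y.1 :=
    (Finset.sum_subtype (Finset.univ.filter fun y : {i // i ∈ t'} => P y.1)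
      (fun x => by simp) (fun y => k y.1)).symm
  rw [h3, Finset.sum_filter, Finset.sum_coe_sort t' (fun i => if P i then k i else 0),
    ← Finset.sum_filter]

/-- The spanning tree polytope of `G`: the convex hull of the characteristic vectors
(indexed by the edges of `G`) of the spanning trees of `G`. -/
noncomputable def spanningTreePolytope {V : Type*} (G : SimpleGraph V) :
    Set (G.edgeSet → ℝ) :=
  convexHull ℝ {x | ∃ T : SimpleGraph V, T.IsTree ∧ T ≤ G ∧
    x = fun e : G.edgeSet => if (e : Sym2 V) ∈ T.edgeSet then (1 : ℝ) else 0}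

/-- If `x` is a rational vector in the spanning tree polytope of a connected graph `G`,
then there is a positive integer `L` such that `L·x_e` is a nonnegative integer for every
edge `e`, and the multigraph obtained by replacing each edge `e` by `L·x_e` parallel copies
contains `L` pairwise edge-disjoint spanning trees; equivalently, there are spanning trees
`T 1, …, T L` of `G` such that each edge `e` is used by at most `L·x_e` of them. -/
theorem exists_integral_tree_packing {V : Type*} [Fintype V]
    (G : SimpleGraph V) (hG : G.Connected)
    (x : G.edgeSet → ℝ) (hrat : ∀ e, ∃ q : ℚ, x e = (q : ℝ))
    (hx : x ∈ spanningTreePolytope G) :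
    ∃ L : ℕ, 0 < L ∧ (∀ e, ∃ k : ℕ, (L : ℝ) * x e = (k : ℝ)) ∧
      ∃ T : Fin L → SimpleGraph V,
        (∀ i, (T i).IsTree ∧ T i ≤ G) ∧
        ∀ e : G.edgeSet,
          (({i : Fin L | (e : Sym2 V) ∈ (T i).edgeSet}.ncard : ℝ)) ≤ (L : ℝ) * x e := by
  rw [spanningTreePolytope, convexHull_eq] at hx
  obtain ⟨ι, t, w, z, hw0, hw1, hz, hcm⟩ := hx
  choose! Tr hTr1 hTr2 hTr3 using hz
  have hxe : ∀ e : G.edgeSet, x e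
      = ∑ i ∈ t, w i * (if (e : Sym2 V) ∈ (Tr i).edgeSet then (1:ℝ) else 0) := by
    intro e
    rw [← hcm, Finset.centerMass_eq_of_sum_1 _ _ hw1]
    rw [Finset.sum_apply]
    refine Finset.sum_congr rfl fun i hi => ?_
    rw [Pi.smul_apply, hTr3 i hi, smul_eq_mul]
  set t' : Finset ι := t.filter (fun i => w i ≠ 0) with ht'
  have ht'sub : t' ⊆ t := Finset.filter_subset _ _
  have hw0' : ∀ i ∈ t', 0 < w i := by
    intro i hi
    rw [ht', Finset.mem_filter] at hi
    exact lt_of_le_of_ne (hw0 i hi.1) (Ne.symm hi.2)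
  have hw1' : ∑ i ∈ t', w i = 1 := by
    rw [ht', Finset.sum_filter_ne_zero]
    exact hw1
  have hxe' : ∀ e : G.edgeSet, x e
      = ∑ i ∈ t', w i * (if (e : Sym2 V) ∈ (Tr i).edgeSet then (1:ℝ) else 0) := by
    intro e
    rw [hxe e, ht', Finset.sum_filter_of_ne]
    intro i _ hne hwi
    rw [hwi, zero_mul] at hne
    exact hne rfl
  have ht'ne : t'.Nonempty := by
    rcases Finset.eq_empty_or_nonempty t' with h | h
    · rw [h, Finset.sum_empty] at hw1'; norm_num at hw1'
    · exact h
  set ε : ℝ := t'.inf' ht'ne w with hε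
  have hε0 : 0 < ε := by
    rw [hε, Finset.lt_inf'_iff]
    exact hw0'
  obtain ⟨q, hqnear, hqrel⟩ := rational_approx_solution t' w ε hε0
  have hqpos : ∀ i ∈ t', 0 < q i := by
    intro i hi
    have h1 := abs_lt.mp (hqnear i hi)
    have h2 : ε ≤ w i := Finset.inf'_le w hi
    have h3 : (0:ℝ) < (q i : ℝ) := by linarith [h1.1]
    exact_mod_cast h3
  choose xq hxq using hrat
  have hrel1 : ∑ i ∈ t', q i = 1 := by
    have := hqrel (fun _ => 1) 1 (by simpa using hw1')
    simpa using this
  have hrele : ∀ e : G.edgeSet,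
      ∑ i ∈ t', (if (e : Sym2 V) ∈ (Tr i).edgeSet then (1:ℚ) else 0) * q i = xq e := by
    intro e
    refine hqrel _ _ ?_
    rw [← hxq e, hxe' e]
    refine Finset.sum_congr rfl fun i _ => ?_
    rw [mul_comm]
    congr 1
    split <;> norm_num
  -- the common denominator
  set L : ℕ := ∏ i ∈ t', (q i).den with hL
  have hL0 : 0 < L := Finset.prod_pos fun i _ => (q i).pos
  have hqL : ∀ i ∈ t', ∃ k : ℕ, ((k : ℚ)) = q i * L := by
    intro i hi
    obtain ⟨m, hm⟩ := Finset.dvd_prod_of_mem (fun i => (q i).den) hi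
    have hql : q i * (∏ j ∈ t', (q j).den) = ((q i).num * m : ℤ) := by
      rw [hm]
      push_cast
      rw [← mul_assoc, Rat.mul_den_eq_num]
    have hnn : 0 ≤ (q i).num * m := by
      have h0 : (0:ℚ) ≤ q i * (∏ j ∈ t', (q j).den) := by
        have := hqpos i hi
        positivity
      rw [hql] at h0
      exact_mod_cast h0
    refine ⟨((q i).num * m).toNat, ?_⟩
    rw [hL, hql]
    exact_mod_cast congrArg (fun z : ℤ => (z : ℚ)) (Int.toNat_of_nonneg hnn)
  choose! k hk using hqL
  have hkL : ∑ i ∈ t', k i = L := by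
    have hcast : ((∑ i ∈ t', k i : ℕ) : ℚ) = ((L : ℕ) : ℚ) := by
      push_cast
      rw [Finset.sum_congr rfl hk, ← Finset.sum_mul, hrel1, one_mul]
    exact_mod_cast hcast
  -- value of `L * x e` as a natural number
  have hke : ∀ e : G.edgeSet,
      ((∑ i ∈ t'.filter (fun i => (e : Sym2 V) ∈ (Tr i).edgeSet), k i : ℕ) : ℚ)
        = xq e * L := by
    intro e
    push_cast
    rw [Finset.sum_congr rfl (fun i hi => hk i (Finset.mem_of_mem_filter i hi))]
    rw [← Finset.sum_mul]
    congr 1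
    rw [← hrele e, Finset.sum_filter]
    refine Finset.sum_congr rfl fun i _ => ?_
    split <;> simp
  have hLxe : ∀ e : G.edgeSet, (L : ℝ) * x e
      = ((∑ i ∈ t'.filter (fun i => (e : Sym2 V) ∈ (Tr i).edgeSet), k i : ℕ) : ℝ) := by
    intro e
    have := hke e
    have hcast : ((∑ i ∈ t'.filter (fun i => (e : Sym2 V) ∈ (Tr i).edgeSet), k i : ℕ) : ℝ)
        = ((xq e * L : ℚ) : ℝ) := by exact_mod_cast congrArg (fun z : ℚ => (z : ℝ)) this
    rw [hcast, hxq e]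
    push_cast
    ring
  obtain ⟨f, hf⟩ := exists_fiber_assignment t' k L hkL
  refine ⟨L, hL0, fun e => ⟨_, hLxe e⟩, fun n => Tr (f n).1, ?_, ?_⟩
  · intro n
    have hmem : (f n).1 ∈ t := ht'sub (f n).2
    exact ⟨hTr1 _ hmem, hTr2 _ hmem⟩
  · intro e
    rw [hf (fun i => (e : Sym2 V) ∈ (Tr i).edgeSet), hLxe e]
    exact le_of_eq (by congr!)
end

section
/- Let G = (V,E) be a graph on n vertices and m edges. Suppose edges are contracted one at a time (with arbitrary interleaved edge deletions), where contracting edge u_k v_k in the current graph G_k costs at most α · min(deg_{G_k}(u_k), deg_{G_k}(v_k)). Then the total cost over any sequence that contracts the graph down to a single vertex is at most O(α · m · log n); formally, at most α · (log₂ n + 1) · ∑_{v∈V} deg_G(v) = 2α·m·(log₂ n + 1). -/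
/-!
Track the classes of the partition of `V` as vertices are merged. Charge each merge to the
vertices of the smaller of the two classes, so that a merge costs at most `α` times the total
degree of the charged vertices. A charged vertex sees the size of its class at least double,
and classes never exceed `n` vertices, so each vertex is charged at most `log₂ n` times.
Summing over vertices bounds the total cost by `α log₂ n ∑_v deg(v)`.
-/

open Finset

namespace ContractionSequence

variable {V : Type*}

structure IsClassMap (C : V → Finset V) : Prop where
  mem_self : ∀ x, x ∈ C x
  eq_of_mem : ∀ {x y}, x ∈ C y → C x = C y

theorem isClassMap_singleton : IsClassMap (fun x : V => ({x} : Finset V)) where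
  mem_self x := mem_singleton_self x
  eq_of_mem h := by rw [mem_singleton.mp h]

theorem IsClassMap.disjoint_of_ne {C : V → Finset V} (hC : IsClassMap C) {a b : V}
    (hab : C a ≠ C b) : Disjoint (C a) (C b) :=
  disjoint_left.mpr fun _ hza hzb => hab ((hC.eq_of_mem hza).symm.trans (hC.eq_of_mem hzb))

def smallerClass (C : V → Finset V) (a b : V) : Finset V :=
  if #(C a) ≤ #(C b) then C a else C b

theorem two_mul_card_smallerClass_le (C : V → Finset V) (a b : V) :
    2 * #(smallerClass C a b) ≤ #(C a) + #(C b) := by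
  unfold smallerClass
  split_ifs <;> omega

theorem min_sum_le_sum_smallerClass {R : Type*} [AddCommMonoid R] [LinearOrder R]
    (C : V → Finset V) (a b : V) (w : V → R) :
    min (∑ x ∈ C a, w x) (∑ x ∈ C b, w x) ≤ ∑ x ∈ smallerClass C a b, w x := by
  unfold smallerClass
  split_ifs
  exacts [min_le_left _ _, min_le_right _ _]

variable [DecidableEq V]

def mergeClasses (C : V → Finset V) (a b : V) : V → Finset V :=
  fun x => if x ∈ C a ∪ C b then C a ∪ C b else C x

theorem smallerClass_subset (C : V → Finset V) (a b : V) :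
    smallerClass C a b ⊆ C a ∪ C b := by
  unfold smallerClass
  split_ifs
  exacts [subset_union_left, subset_union_right]

namespace IsClassMap

variable {C : V → Finset V}

theorem subset_union_of_mem_union (hC : IsClassMap C) {a b x : V} (hx : x ∈ C a ∪ C b) :
    C x ⊆ C a ∪ C b := by
  rcases mem_union.mp hx with h | h
  · exact hC.eq_of_mem h ▸ subset_union_left
  · exact hC.eq_of_mem h ▸ subset_union_right

theorem mergeClasses (hC : IsClassMap C) (a b : V) : IsClassMap (mergeClasses C a b) where
  mem_self x := by
    unfold ContractionSequence.mergeClasses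
    split_ifs with hx
    exacts [hx, hC.mem_self x]
  eq_of_mem {x y} hxy := by
    unfold ContractionSequence.mergeClasses at hxy ⊢
    by_cases hy : y ∈ C a ∪ C b
    · rw [if_pos hy] at hxy
      rw [if_pos hxy, if_pos hy]
    · rw [if_neg hy] at hxy
      have hCxy := hC.eq_of_mem hxy
      -- `x` and `y` share a class, so a merged class containing `x` would contain `y`.
      have hx : x ∉ C a ∪ C b := fun hx =>
        hy (hC.subset_union_of_mem_union hx (hCxy ▸ hC.mem_self y))
      rw [if_neg hx, if_neg hy, hCxy]

theorem card_le_card_mergeClasses (hC : IsClassMap C) (a b x : V) :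
    #(C x) ≤ #(ContractionSequence.mergeClasses C a b x) := by
  unfold ContractionSequence.mergeClasses
  split_ifs with hx
  exacts [card_le_card (hC.subset_union_of_mem_union hx), le_rfl]

theorem two_mul_card_le_card_mergeClasses (hC : IsClassMap C) {a b x : V} (hab : C a ≠ C b)
    (hx : x ∈ smallerClass C a b) :
    2 * #(C x) ≤ #(ContractionSequence.mergeClasses C a b x) := by
  have hxab := smallerClass_subset C a b hx
  have hCx : C x = smallerClass C a b := by
    unfold smallerClass at hx ⊢
    split_ifs at hx ⊢ <;> exact hC.eq_of_mem hx
  rw [ContractionSequence.mergeClasses, if_pos hxab, card_union_of_disjoint (hC.disjoint_of_ne hab),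
    hCx]
  exact two_mul_card_smallerClass_le C a b

end IsClassMap

section Sequence

variable {C : ℕ → V → Finset V} {u v : ℕ → V} {N : ℕ}

def chargeCount (C : ℕ → V → Finset V) (u v : ℕ → V) (k : ℕ) (x : V) : ℕ :=
  #{j ∈ range k | x ∈ smallerClass (C j) (u j) (v j)}

theorem isClassMap_of_le (hC0 : C 0 = fun x => {x})
    (hstep : ∀ k < N, C (k + 1) = mergeClasses (C k) (u k) (v k)) :
    ∀ k ≤ N, IsClassMap (C k)
  | 0, _ => hC0 ▸ isClassMap_singleton
  | k + 1, hk => hstep k hk ▸ (isClassMap_of_le hC0 hstep k (by omega)).mergeClasses _ _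

theorem two_pow_card_charges_le (hC0 : C 0 = fun x => {x})
    (hstep : ∀ k < N, C (k + 1) = mergeClasses (C k) (u k) (v k))
    (hne : ∀ k < N, C k (u k) ≠ C k (v k)) (x : V) :
    ∀ k ≤ N, 2 ^ chargeCount C u v k x ≤ #(C k x)
  | 0, _ => by simp [chargeCount, hC0]
  | k + 1, hk => by
    have hC := isClassMap_of_le hC0 hstep k (by omega)
    have ih := two_pow_card_charges_le hC0 hstep hne x k (by omega)
    rw [chargeCount, range_add_one, filter_insert, hstep k hk]
    split_ifs with hx
    · rw [card_insert_of_notMem (by simp), pow_succ]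
      exact (Nat.mul_le_mul_right 2 ih).trans
        (by linarith [hC.two_mul_card_le_card_mergeClasses (hne k hk) hx])
    · exact ih.trans (hC.card_le_card_mergeClasses _ _ x)

variable [Fintype V]

theorem card_charges_le_logb (hC0 : C 0 = fun x => {x})
    (hstep : ∀ k < N, C (k + 1) = mergeClasses (C k) (u k) (v k))
    (hne : ∀ k < N, C k (u k) ≠ C k (v k)) (x : V) :
    (chargeCount C u v N x : ℝ) ≤
      Real.logb 2 (Fintype.card V) := by
  have h := (two_pow_card_charges_le hC0 hstep hne x N le_rfl).trans (card_le_univ (C N x))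
  have hpos : (0 : ℝ) < Fintype.card V := by exact_mod_cast Nat.one_le_two_pow.trans h
  rw [Real.le_logb_iff_rpow_le one_lt_two hpos, Real.rpow_natCast]
  exact_mod_cast h

theorem sum_sum_smallerClass_le (hC0 : C 0 = fun x => {x})
    (hstep : ∀ k < N, C (k + 1) = mergeClasses (C k) (u k) (v k))
    (hne : ∀ k < N, C k (u k) ≠ C k (v k)) (w : V → ℝ) (hw : ∀ x, 0 ≤ w x) :
    ∑ k ∈ range N, ∑ x ∈ smallerClass (C k) (u k) (v k), w x ≤
      Real.logb 2 (Fintype.card V) * ∑ x, w x := by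
  rw [sum_comm' (t' := univ) (s' := fun x => {j ∈ range N | x ∈ smallerClass (C j) (u j) (v j)})
    (by simp), mul_sum]
  refine sum_le_sum fun x _ => ?_
  rw [sum_const, nsmul_eq_mul, ← chargeCount]
  exact mul_le_mul_of_nonneg_right (card_charges_le_logb hC0 hstep hne x) (hw x)

end Sequence

end ContractionSequence

open ContractionSequence in
theorem contraction_sequence_total_cost_general {V : Type*} [Fintype V] [DecidableEq V]
    (G : SimpleGraph V) [DecidableRel G.Adj]
    (n m : ℕ) (hn : Fintype.card V = n) (hm : G.edgeFinset.card = m)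
    (α : ℝ) (hα : 0 ≤ α)
    (C : ℕ → V → Finset V) (u v : ℕ → V) (cost : ℕ → ℝ)
    (hC0 : ∀ x, C 0 x = {x})
    (hmerge : ∀ k < n - 1, C k (u k) ≠ C k (v k) ∧
      ∀ x, C (k + 1) x =
        if x ∈ C k (u k) ∪ C k (v k) then C k (u k) ∪ C k (v k) else C k x)
    (hcost : ∀ k < n - 1, cost k ≤
      α * min (∑ x ∈ C k (u k), (G.degree x : ℝ)) (∑ x ∈ C k (v k), (G.degree x : ℝ))) :
    ∑ k ∈ Finset.range (n - 1), cost k ≤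
        α * (Real.logb 2 n + 1) * ∑ x : V, (G.degree x : ℝ) ∧
      α * (Real.logb 2 n + 1) * ∑ x : V, (G.degree x : ℝ) =
        2 * α * m * (Real.logb 2 n + 1) := by
  have hD : ∑ x : V, (G.degree x : ℝ) = 2 * m := by
    rw [← hm]
    exact_mod_cast G.sum_degrees_eq_twice_card_edges
  set D := ∑ x : V, (G.degree x : ℝ)
  have hcharges := sum_sum_smallerClass_le (funext hC0) (fun k hk => funext (hmerge k hk).2)
    (fun k hk => (hmerge k hk).1) (fun x => (G.degree x : ℝ)) (fun x => by positivity)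
  rw [hn] at hcharges
  have hαD : 0 ≤ α * D := mul_nonneg hα (by positivity)
  refine ⟨?_, by rw [hD]; ring⟩
  calc ∑ k ∈ range (n - 1), cost k
      ≤ ∑ k ∈ range (n - 1), α * ∑ x ∈ smallerClass (C k) (u k) (v k), (G.degree x : ℝ) :=
        sum_le_sum fun k hk => (hcost k (mem_range.mp hk)).trans
          (mul_le_mul_of_nonneg_left (min_sum_le_sum_smallerClass _ _ _ _) hα)
    _ ≤ α * (Real.logb 2 n * D) := by rw [← mul_sum]; gcongr
    _ ≤ α * (Real.logb 2 n + 1) * D := by linarith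

/-- Total cost of a contraction sequence. Start with the trivial partition of the vertex
set of a graph `G` with `m` edges into singleton classes `C 0 x = {x}`. At each step
`k < n - 1` the classes of `u k` and `v k` (which are distinct) are merged, at a cost
`cost k` which is at most `α` times the smaller of the total `G`-degrees of the two
classes. Then the total cost is at most `α (log₂ n + 1) ∑_v deg_G(v) = 2 α m (log₂ n + 1)`. -/
theorem contraction_sequence_total_cost {V : Type*} [Fintype V] [DecidableEq V]
    (G : SimpleGraph V) [DecidableRel G.Adj]
    (n m : ℕ) (hn : Fintype.card V = n) (hn2 : 2 ≤ n) (hm : G.edgeFinset.card = m)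
    (α : ℝ) (hα : 0 ≤ α)
    (C : ℕ → V → Finset V) (u v : ℕ → V) (cost : ℕ → ℝ)
    (hC0 : ∀ x, C 0 x = {x})
    (hmerge : ∀ k < n - 1, C k (u k) ≠ C k (v k) ∧
      ∀ x, C (k + 1) x =
        if x ∈ C k (u k) ∪ C k (v k) then C k (u k) ∪ C k (v k) else C k x)
    (hcost : ∀ k < n - 1, cost k ≤
      α * min (∑ x ∈ C k (u k), (G.degree x : ℝ)) (∑ x ∈ C k (v k), (G.degree x : ℝ))) :
    ∑ k ∈ Finset.range (n - 1), cost k ≤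
        α * (Real.logb 2 n + 1) * ∑ x : V, (G.degree x : ℝ) ∧
      α * (Real.logb 2 n + 1) * ∑ x : V, (G.degree x : ℝ) =
        2 * α * m * (Real.logb 2 n + 1) :=
  contraction_sequence_total_cost_general G n m hn hm α hα C u v cost hC0 hmerge hcost
end
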